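/- arXiv:2304.14643 — 2 statements merged into one kernel-verified Lean document; each statement's English description precedes it below -/
import Mathlib

section
/- Let c and γ be two disjoint convex subsets of ℝ^d. Define F(c,γ) = {x ∈ ℝ^d : ∃ y ∈ γ such that the closed segment from x to y intersects c}, and symmetrically F(γ,c). Then F(γ,c) ∩ F(c,γ) = ∅. -/
/-- `Fset c γ` is the set `F(c,γ)` of points `x` such that some segment from `x`
to a point of `γ` intersects `c`. -/
def Fset {d : ℕ} (c γ : Set (EuclideanSpace ℝ (Fin d))) : Set (EuclideanSpace ℝ (Fin d)) :=
  {x | ∃ y ∈ γ, (segment ℝ x y ∩ c).Nonempty}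

/-- Pasch's axiom. -/
theorem segment_inter_segment_nonempty_of_mem_segment {𝕜 E : Type*} [Field 𝕜] [LinearOrder 𝕜]
    [IsStrictOrderedRing 𝕜] [AddCommGroup E] [Module 𝕜 E] {x y y' p q : E}
    (hp : p ∈ segment 𝕜 x y) (hq : q ∈ segment 𝕜 x y') :
    (segment 𝕜 p y' ∩ segment 𝕜 q y).Nonempty := by
  obtain ⟨u, s, hu, hs, hus, rfl⟩ := hp
  obtain ⟨v, t, hv, ht, hvt, rfl⟩ := hq
  obtain rfl : u = 1 - s := by linarith
  obtain rfl : v = 1 - t := by linarith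
  rcases eq_or_lt_of_le (show s ≤ 1 by linarith) with rfl | hs1
  · refine ⟨y, ?_, right_mem_segment 𝕜 _ _⟩
    simpa using left_mem_segment 𝕜 y y'
  -- With `D = 1 - s t`, the meeting point has barycentric coordinates
  -- `((1 - s)(1 - t), s (1 - t), t (1 - s)) / D` with respect to `x, y, y'`.
  have hD : 0 < 1 - s * t := by nlinarith
  refine ⟨((1 - s) * (1 - t) / (1 - s * t)) • x + (s * (1 - t) / (1 - s * t)) • y +
      (t * (1 - s) / (1 - s * t)) • y', ⟨(1 - t) / (1 - s * t), t * (1 - s) / (1 - s * t),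
      by apply div_nonneg <;> nlinarith, by apply div_nonneg <;> nlinarith, ?_, ?_⟩,
      ⟨(1 - s) / (1 - s * t), s * (1 - t) / (1 - s * t),
      by apply div_nonneg <;> nlinarith, by apply div_nonneg <;> nlinarith, ?_, ?_⟩⟩
  · rw [← add_div, div_eq_one_iff_eq hD.ne']; ring
  · match_scalars <;> field_simp
  · rw [← add_div, div_eq_one_iff_eq hD.ne']; ring
  · match_scalars <;> field_simp

theorem stmt0 {d : ℕ} (c γ : Set (EuclideanSpace ℝ (Fin d)))
    (hc : Convex ℝ c) (hγ : Convex ℝ γ) (hdisj : c ∩ γ = ∅) :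
    Fset γ c ∩ Fset c γ = ∅ := by
  refine Set.eq_empty_of_forall_notMem fun x ⟨⟨y, hyc, p, hp, hpγ⟩, ⟨y', hy'γ, q, hq, hqc⟩⟩ => ?_
  obtain ⟨z, hzγ, hzc⟩ := segment_inter_segment_nonempty_of_mem_segment hp hq
  have hz : z ∈ c ∩ γ := ⟨hc.segment_subset hqc hyc hzc, hγ.segment_subset hpγ hy'γ hzγ⟩
  simp [hdisj] at hz
end

section
/- Let s = [x, y] be a segment in ℝ^d and let c₁, c₂ be two sets such that s ∩ (c₁ ⊕ B̄(0,r)) and s ∩ (c₂ ⊕ B̄(0,r)) are both nonempty for every choice of y in a convex set γ and every choice of x in a convex set Ξ (with the sets c₁ ⊕ B̄(0,r) and c₂ ⊕ B̄(0,r) disjoint). Then the order along [x,y] in which the two inflated sets are first encountered (walking from x to y) is the same for all x ∈ Ξ and y ∈ γ. -/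
/-!
For fixed endpoints, the parameters at which the segment meets a closed convex set form a
compact interval. Hence if some hit of `C` comes no later than some hit of `D` (disjoint from
`C`), the first hit of `C` strictly precedes the first hit of `D`: otherwise it would lie in the
interval of hits of `D`. The relation "some hit of `C` comes no later than some hit of `D`" is
closed in the endpoints, being the projection of a closed set along the compact square of
parameters. So the two orders cut `Ξ × γ` into two disjoint closed pieces, and as a convex set
it is connected.
-/

open Pointwise

/-- The parameter along the oriented segment from `p` to `q` at which the set `C`
is first encountered. -/
noncomputable def firstHit {d : ℕ} (p q : EuclideanSpace ℝ (Fin d))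
    (C : Set (EuclideanSpace ℝ (Fin d))) : ℝ :=
  sInf {t ∈ Set.Icc (0 : ℝ) 1 | (1 - t) • p + t • q ∈ C}

open Set

section HitSet

variable {E : Type*} [AddCommGroup E] [Module ℝ E]

/-- `firstHit p q C` is `sInf (hitSet p q C)` definitionally. -/
def hitSet (p q : E) (C : Set E) : Set ℝ :=
  {t ∈ Icc (0 : ℝ) 1 | (1 - t) • p + t • q ∈ C}

lemma hitSet_nonempty_of_segment_inter {p q : E} {C : Set E}
    (h : (segment ℝ p q ∩ C).Nonempty) : (hitSet p q C).Nonempty := by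
  obtain ⟨_, hz, hzC⟩ := h
  rw [segment_eq_image] at hz
  obtain ⟨t, ht, rfl⟩ := hz
  exact ⟨t, ht, hzC⟩

lemma Convex.ordConnected_hitSet {C : Set E} (hC : Convex ℝ C) (p q : E) :
    (hitSet p q C).OrdConnected := by
  have : hitSet p q C = Icc 0 1 ∩ AffineMap.lineMap p q ⁻¹' C := by
    ext t
    simp [hitSet, AffineMap.lineMap_apply_module]
  rw [← convex_iff_ordConnected, this]
  exact (convex_Icc 0 1).inter (hC.affine_preimage _)

variable [TopologicalSpace E] [ContinuousAdd E] [ContinuousSMul ℝ E]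

lemma IsClosed.isCompact_hitSet {C : Set E} (hC : IsClosed C) (p q : E) :
    IsCompact (hitSet p q C) :=
  isCompact_Icc.of_isClosed_subset (isClosed_Icc.inter (hC.preimage (by fun_prop)))
    inter_subset_left

def hitsNoLater (C D : Set E) : Set (E × E) :=
  {pq | ∃ s ∈ hitSet pq.1 pq.2 C, ∃ t ∈ hitSet pq.1 pq.2 D, s ≤ t}

lemma isClosed_hitsNoLater {C D : Set E} (hC : IsClosed C) (hD : IsClosed D) :
    IsClosed (hitsNoLater C D) := by
  let K : Set ((E × E) × (Icc (0 : ℝ) 1 × Icc (0 : ℝ) 1)) :=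
    {z | (1 - (z.2.1 : ℝ)) • z.1.1 + (z.2.1 : ℝ) • z.1.2 ∈ C ∧
      (1 - (z.2.2 : ℝ)) • z.1.1 + (z.2.2 : ℝ) • z.1.2 ∈ D ∧ (z.2.1 : ℝ) ≤ z.2.2}
  have hK : IsClosed K :=
    (hC.preimage (by fun_prop)).inter ((hD.preimage (by fun_prop)).inter
      (isClosed_le (f := fun z : (E × E) × (Icc (0 : ℝ) 1 × Icc (0 : ℝ) 1) => (z.2.1 : ℝ))
        (g := fun z => (z.2.2 : ℝ)) (by fun_prop) (by fun_prop)))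
  have : hitsNoLater C D = Prod.fst '' K := by
    ext ⟨p, q⟩
    constructor
    · rintro ⟨s, hs, t, ht, hst⟩
      exact ⟨((p, q), (⟨s, hs.1⟩, ⟨t, ht.1⟩)), ⟨hs.2, ht.2, hst⟩, rfl⟩
    · rintro ⟨⟨_, s, t⟩, ⟨hs, ht, hst⟩, rfl⟩
      exact ⟨s, ⟨s.2, hs⟩, t, ⟨t.2, ht⟩, hst⟩
  rw [this]
  exact isClosedMap_fst_of_compactSpace K hK

end HitSet

section FirstHit

variable {d : ℕ} {p q : EuclideanSpace ℝ (Fin d)} {C D : Set (EuclideanSpace ℝ (Fin d))}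

lemma firstHit_mem_hitSet (hC : IsClosed C) (hne : (hitSet p q C).Nonempty) :
    firstHit p q C ∈ hitSet p q C :=
  (hC.isCompact_hitSet p q).sInf_mem hne

lemma firstHit_ne (hC : IsClosed C) (hD : IsClosed D) (hCD : Disjoint C D)
    (hCne : (hitSet p q C).Nonempty) (hDne : (hitSet p q D).Nonempty) :
    firstHit p q C ≠ firstHit p q D := fun h =>
  hCD.ne_of_mem (firstHit_mem_hitSet hC hCne).2 (h ▸ firstHit_mem_hitSet hD hDne).2 rfl

lemma firstHit_lt_of_mem_hitsNoLater (hC : IsClosed C) (hD : IsClosed D) (hDc : Convex ℝ D)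
    (hCD : Disjoint C D) (hCne : (hitSet p q C).Nonempty) (hDne : (hitSet p q D).Nonempty)
    (h : (p, q) ∈ hitsNoLater C D) : firstHit p q C < firstHit p q D := by
  obtain ⟨s, hs, t, ht, hst⟩ := h
  refine lt_of_le_of_ne (not_lt.mp fun hlt => ?_) (firstHit_ne hC hD hCD hCne hDne)
  have hfirst_le : firstHit p q C ≤ s := csInf_le ⟨0, fun u hu => hu.1.1⟩ hs
  have hmem : firstHit p q C ∈ hitSet p q D :=
    (hDc.ordConnected_hitSet p q).out (firstHit_mem_hitSet hD hDne) ht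
      ⟨hlt.le, hfirst_le.trans hst⟩
  exact hCD.ne_of_mem (firstHit_mem_hitSet hC hCne).2 hmem.2 rfl

lemma mem_hitsNoLater_of_firstHit_le (hC : IsClosed C) (hD : IsClosed D)
    (hCne : (hitSet p q C).Nonempty) (hDne : (hitSet p q D).Nonempty)
    (h : firstHit p q C ≤ firstHit p q D) : (p, q) ∈ hitsNoLater C D :=
  ⟨_, firstHit_mem_hitSet hC hCne, _, firstHit_mem_hitSet hD hDne, h⟩

end FirstHit

lemma IsPreconnected.firstHit_lt_or_gt {d : ℕ}
    {S : Set (EuclideanSpace ℝ (Fin d) × EuclideanSpace ℝ (Fin d))} (hS : IsPreconnected S)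
    {C D : Set (EuclideanSpace ℝ (Fin d))} (hC : IsClosed C) (hD : IsClosed D)
    (hCc : Convex ℝ C) (hDc : Convex ℝ D) (hCD : Disjoint C D)
    (hne : ∀ pq ∈ S, (hitSet pq.1 pq.2 C).Nonempty ∧ (hitSet pq.1 pq.2 D).Nonempty) :
    (∀ pq ∈ S, firstHit pq.1 pq.2 C < firstHit pq.1 pq.2 D) ∨
      (∀ pq ∈ S, firstHit pq.1 pq.2 D < firstHit pq.1 pq.2 C) := by
  by_contra! ⟨⟨pq, hpq, hDleC⟩, ⟨pq', hpq', hCleD⟩⟩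
  have hcover : S ⊆ hitsNoLater C D ∪ hitsNoLater D C := fun x hx =>
    (le_total (firstHit x.1 x.2 C) (firstHit x.1 x.2 D)).imp
      (mem_hitsNoLater_of_firstHit_le hC hD (hne x hx).1 (hne x hx).2)
      (mem_hitsNoLater_of_firstHit_le hD hC (hne x hx).2 (hne x hx).1)
  obtain ⟨x, hx, hxCD, hxDC⟩ := isPreconnected_closed_iff.mp hS _ _
    (isClosed_hitsNoLater hC hD) (isClosed_hitsNoLater hD hC) hcover
    ⟨pq', hpq', mem_hitsNoLater_of_firstHit_le hC hD (hne pq' hpq').1 (hne pq' hpq').2 hCleD⟩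
    ⟨pq, hpq, mem_hitsNoLater_of_firstHit_le hD hC (hne pq hpq).2 (hne pq hpq).1 hDleC⟩
  exact lt_asymm
    (firstHit_lt_of_mem_hitsNoLater hC hD hDc hCD (hne x hx).1 (hne x hx).2 hxCD)
    (firstHit_lt_of_mem_hitsNoLater hD hC hCc hCD.symm (hne x hx).2 (hne x hx).1 hxDC)

theorem stmt17_general {d : ℕ} (c₁ c₂ Ξ γ : Set (EuclideanSpace ℝ (Fin d))) (r : ℝ)
    (h1 : IsCompact c₁) (h2 : IsCompact c₂)
    (hC1 : Convex ℝ (c₁ + Metric.closedBall (0 : EuclideanSpace ℝ (Fin d)) r))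
    (hC2 : Convex ℝ (c₂ + Metric.closedBall (0 : EuclideanSpace ℝ (Fin d)) r))
    (hdisj : Disjoint (c₁ + Metric.closedBall (0 : EuclideanSpace ℝ (Fin d)) r)
      (c₂ + Metric.closedBall (0 : EuclideanSpace ℝ (Fin d)) r))
    (hΞ : Convex ℝ Ξ) (hγ : Convex ℝ γ)
    (hhit : ∀ x ∈ Ξ, ∀ y ∈ γ,
      (segment ℝ x y ∩ (c₁ + Metric.closedBall (0 : EuclideanSpace ℝ (Fin d)) r)).Nonempty ∧
      (segment ℝ x y ∩ (c₂ + Metric.closedBall (0 : EuclideanSpace ℝ (Fin d)) r)).Nonempty) :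
    (∀ x ∈ Ξ, ∀ y ∈ γ,
        firstHit x y (c₁ + Metric.closedBall (0 : EuclideanSpace ℝ (Fin d)) r) <
          firstHit x y (c₂ + Metric.closedBall (0 : EuclideanSpace ℝ (Fin d)) r)) ∨
    (∀ x ∈ Ξ, ∀ y ∈ γ,
        firstHit x y (c₂ + Metric.closedBall (0 : EuclideanSpace ℝ (Fin d)) r) <
          firstHit x y (c₁ + Metric.closedBall (0 : EuclideanSpace ℝ (Fin d)) r)) := by
  have hcl1 := (h1.add (isCompact_closedBall 0 r)).isClosed
  have hcl2 := (h2.add (isCompact_closedBall 0 r)).isClosed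
  have hne : ∀ pq ∈ Ξ ×ˢ γ, (hitSet pq.1 pq.2 (c₁ + Metric.closedBall 0 r)).Nonempty ∧
      (hitSet pq.1 pq.2 (c₂ + Metric.closedBall 0 r)).Nonempty := fun pq hpq =>
    (hhit pq.1 hpq.1 pq.2 hpq.2).imp hitSet_nonempty_of_segment_inter
      hitSet_nonempty_of_segment_inter
  refine ((hΞ.prod hγ).isPreconnected.firstHit_lt_or_gt hcl1 hcl2 hC1 hC2 hdisj hne).imp ?_ ?_ <;>
    exact fun h x hx y hy => h (x, y) ⟨hx, hy⟩

theorem stmt17 {d : ℕ} (c₁ c₂ Ξ γ : Set (EuclideanSpace ℝ (Fin d))) (r : ℝ) (hr : 0 ≤ r)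
    (h1 : IsCompact c₁) (h2 : IsCompact c₂)
    (hC1 : Convex ℝ (c₁ + Metric.closedBall (0 : EuclideanSpace ℝ (Fin d)) r))
    (hC2 : Convex ℝ (c₂ + Metric.closedBall (0 : EuclideanSpace ℝ (Fin d)) r))
    (hdisj : Disjoint (c₁ + Metric.closedBall (0 : EuclideanSpace ℝ (Fin d)) r)
      (c₂ + Metric.closedBall (0 : EuclideanSpace ℝ (Fin d)) r))
    (hΞ : Convex ℝ Ξ) (hγ : Convex ℝ γ)
    (hhit : ∀ x ∈ Ξ, ∀ y ∈ γ,
      (segment ℝ x y ∩ (c₁ + Metric.closedBall (0 : EuclideanSpace ℝ (Fin d)) r)).Nonempty ∧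
      (segment ℝ x y ∩ (c₂ + Metric.closedBall (0 : EuclideanSpace ℝ (Fin d)) r)).Nonempty) :
    (∀ x ∈ Ξ, ∀ y ∈ γ,
        firstHit x y (c₁ + Metric.closedBall (0 : EuclideanSpace ℝ (Fin d)) r) <
          firstHit x y (c₂ + Metric.closedBall (0 : EuclideanSpace ℝ (Fin d)) r)) ∨
    (∀ x ∈ Ξ, ∀ y ∈ γ,
        firstHit x y (c₂ + Metric.closedBall (0 : EuclideanSpace ℝ (Fin d)) r) <
          firstHit x y (c₁ + Metric.closedBall (0 : EuclideanSpace ℝ (Fin d)) r)) :=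
  stmt17_general c₁ c₂ Ξ γ r h1 h2 hC1 hC2 hdisj hΞ hγ hhit
end
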